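/- arXiv:1102.1859 — 2 statements merged into one kernel-verified Lean document; each statement's English description precedes it below -/
import Mathlib

section
/- Let G be a finite simple graph and let S₁, …, S_k (k ≥ 1) be inclusion-minimal independent sets with d(S_i) > 0 for each i, such that for every i, S_i is not contained in the union of the other sets S_j (j ≠ i). Then d(S₁ ∪ S₂ ∪ … ∪ S_k) ≥ k. -/
/-!
The difference `d` is supermodular, `d X + d Y ≤ d (X ∪ Y) + d (X ∩ Y)`, because `N` commutes with
unions and `N (X ∩ Y) ⊆ N X ∩ N Y`. Adding the sets `Sᵢ` one at a time to a union `U` that does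
not cover `Sᵢ`, the intersection `U ∩ Sᵢ` is a proper independent subset of `Sᵢ`, so by minimality
`d (U ∩ Sᵢ) ≤ 0`, and supermodularity gives `d (U ∪ Sᵢ) ≥ d U + d Sᵢ ≥ d U + 1`.
-/

open Finset

namespace CritGraph

variable {V : Type*} [Fintype V] [DecidableEq V]

/-- The neighborhood of a set of vertices `X`:
all vertices having at least one neighbor in `X`. -/
def nbhd (G : SimpleGraph V) [DecidableRel G.Adj] (X : Finset V) : Finset V :=
  univ.filter fun v => ∃ x ∈ X, G.Adj v x

/-- The difference `d(X) = |X| - |N(X)|` of a set of vertices `X`. -/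
def diff (G : SimpleGraph V) [DecidableRel G.Adj] (X : Finset V) : ℤ :=
  (X.card : ℤ) - ((nbhd G X).card : ℤ)

/-- A set of vertices is independent if no two of its vertices are adjacent. -/
def IsIndep (G : SimpleGraph V) (S : Finset V) : Prop :=
  ∀ u ∈ S, ∀ v ∈ S, ¬ G.Adj u v

instance (G : SimpleGraph V) [DecidableRel G.Adj] : DecidablePred (IsIndep G) := fun S =>
  inferInstanceAs (Decidable (∀ u ∈ S, ∀ v ∈ S, ¬ G.Adj u v))

/-- The critical difference `d_c(G) = max {d(X) : X ⊆ V}`. -/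
def dC (G : SimpleGraph V) [DecidableRel G.Adj] : ℤ :=
  (univ : Finset V).powerset.sup' (Finset.powerset_nonempty _) (diff G)

/-- The critical independence difference `id_c(G) = max {d(I) : I independent}`. -/
def idC (G : SimpleGraph V) [DecidableRel G.Adj] : ℤ :=
  ((univ : Finset V).powerset.filter (IsIndep G)).sup'
    ⟨∅, by simp [IsIndep]⟩ (diff G)

/-- `A` is a critical independent set: `A` is independent and
`d(A) = max {d(I) : I independent}`. -/
def IsCritIndep (G : SimpleGraph V) [DecidableRel G.Adj] (A : Finset V) : Prop :=
  IsIndep G A ∧ ∀ I : Finset V, IsIndep G I → diff G I ≤ diff G A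

instance (G : SimpleGraph V) [DecidableRel G.Adj] : DecidablePred (IsCritIndep G) := fun A =>
  inferInstanceAs (Decidable (IsIndep G A ∧ ∀ I : Finset V, IsIndep G I → diff G I ≤ diff G A))

/-- `ker(G)`: the intersection of all critical independent sets of `G`. -/
def kerG (G : SimpleGraph V) [DecidableRel G.Adj] : Finset V :=
  univ.filter fun v => ∀ A : Finset V, IsCritIndep G A → v ∈ A

/-- `G - v`: the induced subgraph of `G` on `V \ {v}`. -/
def deleteVert (G : SimpleGraph V) (v : V) : SimpleGraph {u : V // u ≠ v} :=
  G.comap Subtype.val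

instance (G : SimpleGraph V) (v : V) [DecidableRel G.Adj] :
    DecidableRel (deleteVert G v).Adj := fun a b =>
  inferInstanceAs (Decidable (G.Adj a.val b.val))

/-- `S` is an inclusion-minimal independent set with positive difference. -/
def MinPosIndep (G : SimpleGraph V) [DecidableRel G.Adj] (S : Finset V) : Prop :=
  IsIndep G S ∧ 0 < diff G S ∧ ∀ S' ⊂ S, ¬ (IsIndep G S' ∧ 0 < diff G S')

/-- `S` is a maximum independent set. -/
def IsMaxIndep (G : SimpleGraph V) (S : Finset V) : Prop :=
  IsIndep G S ∧ ∀ I : Finset V, IsIndep G I → I.card ≤ S.card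

instance (G : SimpleGraph V) [DecidableRel G.Adj] : DecidablePred (IsMaxIndep G) := fun S =>
  inferInstanceAs (Decidable (IsIndep G S ∧ ∀ I : Finset V, IsIndep G I → I.card ≤ S.card))

/-- `core(G)`: the intersection of all maximum independent sets of `G`. -/
def coreG (G : SimpleGraph V) [DecidableRel G.Adj] : Finset V :=
  univ.filter fun v => ∀ A : Finset V, IsMaxIndep G A → v ∈ A

section

variable (G : SimpleGraph V) [DecidableRel G.Adj]

lemma nbhd_union (X Y : Finset V) : nbhd G (X ∪ Y) = nbhd G X ∪ nbhd G Y := by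
  ext v
  simp only [nbhd, mem_filter, mem_univ, true_and, mem_union, or_and_right, exists_or]

lemma nbhd_inter_subset (X Y : Finset V) : nbhd G (X ∩ Y) ⊆ nbhd G X ∩ nbhd G Y := by
  intro v hv
  simp only [nbhd, mem_filter, mem_univ, true_and, mem_inter] at hv ⊢
  obtain ⟨x, ⟨hxX, hxY⟩, hadj⟩ := hv
  exact ⟨⟨x, hxX, hadj⟩, ⟨x, hxY, hadj⟩⟩

lemma diff_add_diff_le_diff_union_add_diff_inter (X Y : Finset V) :
    diff G X + diff G Y ≤ diff G (X ∪ Y) + diff G (X ∩ Y) := by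
  have hcard : #(X ∪ Y) + #(X ∩ Y) = #X + #Y := card_union_add_card_inter X Y
  have hnbhd : #(nbhd G (X ∪ Y)) + #(nbhd G (X ∩ Y)) ≤ #(nbhd G X) + #(nbhd G Y) := by
    calc #(nbhd G (X ∪ Y)) + #(nbhd G (X ∩ Y))
        ≤ #(nbhd G X ∪ nbhd G Y) + #(nbhd G X ∩ nbhd G Y) := by
          rw [nbhd_union]
          exact Nat.add_le_add_left (card_le_card (nbhd_inter_subset G X Y)) _
      _ = #(nbhd G X) + #(nbhd G Y) := card_union_add_card_inter _ _
  simp only [diff]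
  omega

variable {G}

lemma IsIndep.mono {W : Type*} {G : SimpleGraph W} {S T : Finset W} (hS : IsIndep G S)
    (hTS : T ⊆ S) : IsIndep G T :=
  fun u hu v hv => hS u (hTS hu) v (hTS hv)

lemma MinPosIndep.diff_add_one_le_diff_union {S U : Finset V} (hS : MinPosIndep G S)
    (hSU : ¬ S ⊆ U) : diff G U + 1 ≤ diff G (U ∪ S) := by
  have hinter : U ∩ S ⊂ S :=
    ⟨inter_subset_right, fun h => hSU (h.trans inter_subset_left)⟩
  have hinter_nonpos : diff G (U ∩ S) ≤ 0 :=
    not_lt.mp fun hpos => hS.2.2 _ hinter ⟨hS.1.mono hinter.subset, hpos⟩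
  have := diff_add_diff_le_diff_union_add_diff_inter G U S
  have := hS.2.1
  omega

lemma card_le_diff_biUnion {ι : Type*} [DecidableEq ι] (S : ι → Finset V) (T : Finset ι)
    (hmin : ∀ i ∈ T, MinPosIndep G (S i))
    (hnc : ∀ i ∈ T, ¬ S i ⊆ (T.erase i).biUnion S) :
    (#T : ℤ) ≤ diff G (T.biUnion S) := by
  induction T using Finset.induction_on with
  | empty => simp [diff, nbhd]
  | insert i T hi ih =>
    have hT : (#T : ℤ) ≤ diff G (T.biUnion S) := by
      refine ih (fun j hj => hmin j (mem_insert_of_mem hj)) fun j hj hsub => ?_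
      refine hnc j (mem_insert_of_mem hj) (hsub.trans (biUnion_subset_biUnion_of_subset_left S ?_))
      exact erase_subset_erase j (subset_insert i T)
    have hi' : ¬ S i ⊆ T.biUnion S := by
      simpa [erase_insert hi] using hnc i (mem_insert_self i T)
    have hstep := (hmin i (mem_insert_self i T)).diff_add_one_le_diff_union hi'
    rw [biUnion_insert, union_comm, card_insert_of_notMem hi]
    push_cast
    omega

end

theorem diff_biUnion_ge_general (G : SimpleGraph V) [DecidableRel G.Adj] (k : ℕ)
    (S : Fin k → Finset V) (hmin : ∀ i, MinPosIndep G (S i))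
    (hnc : ∀ i : Fin k, ¬ S i ⊆ ((univ : Finset (Fin k)).erase i).biUnion S) :
    (k : ℤ) ≤ diff G ((univ : Finset (Fin k)).biUnion S) := by
  simpa using card_le_diff_biUnion S univ (fun i _ => hmin i) (fun i _ => hnc i)

/-- If `S₁, …, S_k` are inclusion-minimal independent sets with positive difference,
none contained in the union of the others, then `d(S₁ ∪ ⋯ ∪ S_k) ≥ k`. -/
theorem diff_biUnion_ge (G : SimpleGraph V) [DecidableRel G.Adj] (k : ℕ) (hk : 1 ≤ k)
    (S : Fin k → Finset V) (hmin : ∀ i, MinPosIndep G (S i))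
    (hnc : ∀ i : Fin k, ¬ S i ⊆ ((univ : Finset (Fin k)).erase i).biUnion S) :
    (k : ℤ) ≤ diff G ((univ : Finset (Fin k)).biUnion S) :=
  diff_biUnion_ge_general G k S hmin hnc

end CritGraph
end

section
/- For every finite simple graph G, ker(G) ⊆ core(G), i.e., the intersection of all critical independent sets of G is contained in the intersection of all maximum independent sets of G. -/
open Finset

namespace CritGraph

variable {V : Type*} [Fintype V] [DecidableEq V]

lemma mem_nbhd {G : SimpleGraph V} [DecidableRel G.Adj] {X : Finset V} {v : V} :
    v ∈ nbhd G X ↔ ∃ x ∈ X, G.Adj v x := by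
  simp [nbhd]

lemma indep_subset {G : SimpleGraph V} {S T : Finset V} (h : IsIndep G S) (hTS : T ⊆ S) :
    IsIndep G T :=
  fun u hu w hw => h u (hTS hu) w (hTS hw)

/-- Every maximum independent set contains a critical independent subset. -/
lemma exists_critIndep_subset (G : SimpleGraph V) [DecidableRel G.Adj]
    {S : Finset V} (hS : IsMaxIndep G S) : ∃ T, T ⊆ S ∧ IsCritIndep G T := by
  classical
  have hne : (S.powerset).Nonempty := ⟨∅, by simp⟩
  set δ : ℤ := (S.powerset).sup' hne (diff G) with hδdef
  obtain ⟨T, hTmem, hT⟩ := Finset.exists_mem_eq_sup' hne (diff G)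
  have hTS : T ⊆ S := Finset.mem_powerset.mp hTmem
  have hle : ∀ U ⊆ S, diff G U ≤ δ := fun U hU =>
    Finset.le_sup' (diff G) (Finset.mem_powerset.mpr hU)
  have hδ0 : (0 : ℤ) ≤ δ := by
    have h1 := hle ∅ (Finset.empty_subset S)
    have h0 : diff G (∅ : Finset V) = 0 := by simp [diff, nbhd]
    omega
  have hδn : ((δ.toNat : ℤ)) = δ := Int.toNat_of_nonneg hδ0
  -- embeddings into the sum type with dummy vertices
  let inlE : V ↪ V ⊕ Fin δ.toNat := ⟨Sum.inl, Sum.inl_injective⟩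
  let inrE : Fin δ.toNat ↪ V ⊕ Fin δ.toNat := ⟨Sum.inr, Sum.inr_injective⟩
  have hdisj : ∀ (X : Finset V),
      Disjoint (X.map inlE) ((univ : Finset (Fin δ.toNat)).map inrE) := by
    intro X
    rw [Finset.disjoint_left]
    rintro a ha hb
    obtain ⟨w, _, rfl⟩ := Finset.mem_map.mp ha
    obtain ⟨j, _, hj⟩ := Finset.mem_map.mp hb
    simp [inlE, inrE] at hj
  have hcardU : ∀ (X : Finset V),
      ((X.map inlE) ∪ (univ : Finset (Fin δ.toNat)).map inrE).card = X.card + δ.toNat := by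
    intro X
    rw [Finset.card_union_of_disjoint (hdisj X), Finset.card_map, Finset.card_map,
      Finset.card_univ, Fintype.card_fin]
  -- Hall's condition on the bipartite graph (S, N(S)) with δ dummy vertices
  let t : {x // x ∈ S} → Finset (V ⊕ Fin δ.toNat) := fun s =>
    (nbhd G {s.1}).map inlE ∪ (univ : Finset (Fin δ.toNat)).map inrE
  have hall : ∀ A : Finset {x // x ∈ S}, A.card ≤ (A.biUnion t).card := by
    intro A
    rcases A.eq_empty_or_nonempty with rfl | ⟨s₀, hs₀⟩
    · simp
    · set Tv : Finset V := A.image (fun s => s.1) with hTvdef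
      have hTvS : Tv ⊆ S := by
        intro x hx
        obtain ⟨s, _, rfl⟩ := Finset.mem_image.mp hx
        exact s.2
      have hcardTv : Tv.card = A.card := Finset.card_image_of_injective A Subtype.val_injective
      have hsub : (nbhd G Tv).map inlE ∪ (univ : Finset (Fin δ.toNat)).map inrE ⊆
          A.biUnion t := by
        intro x hx
        rcases Finset.mem_union.mp hx with hx | hx
        · obtain ⟨w, hw, rfl⟩ := Finset.mem_map.mp hx
          obtain ⟨y, hy, hadj⟩ := mem_nbhd.mp hw
          obtain ⟨s, hsA, rfl⟩ := Finset.mem_image.mp hy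
          refine Finset.mem_biUnion.mpr ⟨s, hsA, Finset.mem_union_left _ ?_⟩
          exact Finset.mem_map_of_mem _ (mem_nbhd.mpr ⟨s.1, Finset.mem_singleton_self _, hadj⟩)
        · exact Finset.mem_biUnion.mpr ⟨s₀, hs₀, Finset.mem_union_right _ hx⟩
      have h1 : diff G Tv ≤ δ := hle Tv hTvS
      have h2 : Tv.card ≤ (nbhd G Tv).card + δ.toNat := by
        simp only [diff] at h1
        omega
      calc A.card = Tv.card := hcardTv.symm
        _ ≤ (nbhd G Tv).card + δ.toNat := h2
        _ = ((nbhd G Tv).map inlE ∪ (univ : Finset (Fin δ.toNat)).map inrE).card :=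
            (hcardU _).symm
        _ ≤ (A.biUnion t).card := Finset.card_le_card hsub
  obtain ⟨F, Finj, hF⟩ := (Finset.all_card_le_biUnion_card_iff_exists_injective t).mp hall
  -- Now show T is critical
  refine ⟨T, hTS, indep_subset hS.1 hTS, ?_⟩
  intro I hI
  have key : diff G I ≤ δ := by
    -- Lemma A: |I \ S| ≤ |S ∩ N(I)|, by maximality of S
    have hJindep : IsIndep G (I ∪ (S \ nbhd G I)) := by
      intro u hu w hw hadj
      rcases Finset.mem_union.mp hu with hu | hu <;> rcases Finset.mem_union.mp hw with hw | hw
      · exact hI u hu w hw hadj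
      · exact (Finset.mem_sdiff.mp hw).2 (mem_nbhd.mpr ⟨u, hu, hadj.symm⟩)
      · exact (Finset.mem_sdiff.mp hu).2 (mem_nbhd.mpr ⟨w, hw, hadj⟩)
      · exact hS.1 u (Finset.mem_sdiff.mp hu).1 w (Finset.mem_sdiff.mp hw).1 hadj
    have hJcard := hS.2 _ hJindep
    have hIinter : I ∩ (S \ nbhd G I) = I ∩ S := by
      ext x
      simp only [Finset.mem_inter, Finset.mem_sdiff]
      constructor
      · rintro ⟨h1, h2, _⟩; exact ⟨h1, h2⟩
      · rintro ⟨h1, h2⟩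
        refine ⟨h1, h2, fun hx => ?_⟩
        obtain ⟨y, hy, hadj⟩ := mem_nbhd.mp hx
        exact hI x h1 y hy hadj
    have e1 : (I ∪ (S \ nbhd G I)).card + (I ∩ (S \ nbhd G I)).card
        = I.card + (S \ nbhd G I).card := Finset.card_union_add_card_inter _ _
    rw [hIinter] at e1
    have e2 : (S \ nbhd G I).card + (S ∩ nbhd G I).card = S.card :=
      Finset.card_sdiff_add_card_inter _ _
    have e3 : (I \ S).card + (I ∩ S).card = I.card :=
      Finset.card_sdiff_add_card_inter _ _
    have lemA : (I \ S).card ≤ (S ∩ nbhd G I).card := by omega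
    -- the injection step
    set P : Finset V := I ∩ S with hPdef
    set Q : Finset V := S ∩ nbhd G I with hQdef
    have hPQdisj : Disjoint P Q := by
      rw [Finset.disjoint_left]
      intro x hxP hxQ
      have hxI : x ∈ I := (Finset.mem_inter.mp hxP).1
      have hxN : x ∈ nbhd G I := (Finset.mem_inter.mp hxQ).2
      obtain ⟨y, hy, hadj⟩ := mem_nbhd.mp hxN
      exact hI x hxI y hy hadj
    let ψ : V → V ⊕ Fin δ.toNat := fun s =>
      if h : s ∈ S then (if s ∈ nbhd G I then Sum.inl s else F ⟨s, h⟩) else Sum.inl s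
    have hPQS : ∀ s ∈ P ∪ Q, s ∈ S := by
      intro s hs
      rcases Finset.mem_union.mp hs with hs | hs
      · exact (Finset.mem_inter.mp hs).2
      · exact (Finset.mem_inter.mp hs).1
    have hmap : ∀ s ∈ P ∪ Q, ψ s ∈ (nbhd G I).map inlE ∪
        (univ : Finset (Fin δ.toNat)).map inrE := by
      intro s hs
      have hsS := hPQS s hs
      simp only [ψ, dif_pos hsS]
      by_cases hN : s ∈ nbhd G I
      · rw [if_pos hN]
        exact Finset.mem_union_left _ (Finset.mem_map_of_mem _ hN)
      · rw [if_neg hN]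
        have hsP : s ∈ P := by
          rcases Finset.mem_union.mp hs with hs | hs
          · exact hs
          · exact absurd (Finset.mem_inter.mp hs).2 hN
        have hsI : s ∈ I := (Finset.mem_inter.mp hsP).1
        have hFs := hF ⟨s, hsS⟩
        rcases Finset.mem_union.mp hFs with hFs | hFs
        · obtain ⟨w, hw, hweq⟩ := Finset.mem_map.mp hFs
          obtain ⟨y, hy, hadj⟩ := mem_nbhd.mp hw
          have hys : y = s := Finset.mem_singleton.mp hy
          refine Finset.mem_union_left _ ?_
          rw [← hweq]
          exact Finset.mem_map_of_mem _ (mem_nbhd.mpr ⟨s, hsI, hys ▸ hadj⟩)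
        · exact Finset.mem_union_right _ hFs
    have hinj : Set.InjOn ψ (P ∪ Q : Finset V) := by
      intro a ha b hb heq
      have haS := hPQS a ha
      have hbS := hPQS b hb
      simp only [ψ, dif_pos haS, dif_pos hbS] at heq
      by_cases hNa : a ∈ nbhd G I <;> by_cases hNb : b ∈ nbhd G I
      · rw [if_pos hNa, if_pos hNb] at heq
        exact Sum.inl_injective heq
      · rw [if_pos hNa, if_neg hNb] at heq
        exfalso
        have hFb := hF ⟨b, hbS⟩
        rcases Finset.mem_union.mp hFb with hFb | hFb
        · obtain ⟨w, hw, hweq⟩ := Finset.mem_map.mp hFb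
          obtain ⟨y, hy, hadj⟩ := mem_nbhd.mp hw
          have hys : y = b := Finset.mem_singleton.mp hy
          rw [← hweq] at heq
          have haw : a = w := Sum.inl_injective heq
          exact hS.1 a haS b hbS (haw ▸ hys ▸ hadj)
        · obtain ⟨j, _, hj⟩ := Finset.mem_map.mp hFb
          rw [← hj] at heq
          exact Sum.inl_ne_inr heq
      · rw [if_neg hNa, if_pos hNb] at heq
        exfalso
        have hFa := hF ⟨a, haS⟩
        rcases Finset.mem_union.mp hFa with hFa | hFa
        · obtain ⟨w, hw, hweq⟩ := Finset.mem_map.mp hFa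
          obtain ⟨y, hy, hadj⟩ := mem_nbhd.mp hw
          have hys : y = a := Finset.mem_singleton.mp hy
          rw [← hweq] at heq
          have hbw : b = w := Sum.inl_injective heq.symm
          exact hS.1 b hbS a haS (hbw ▸ hys ▸ hadj)
        · obtain ⟨j, _, hj⟩ := Finset.mem_map.mp hFa
          rw [← hj] at heq
          exact Sum.inl_ne_inr heq.symm
      · rw [if_neg hNa, if_neg hNb] at heq
        exact congrArg Subtype.val (Finj heq)
    have hcard2 : (P ∪ Q).card ≤ (nbhd G I).card + δ.toNat := by
      calc (P ∪ Q).card ≤ ((nbhd G I).map inlE ∪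
            (univ : Finset (Fin δ.toNat)).map inrE).card :=
          Finset.card_le_card_of_injOn ψ hmap hinj
        _ = (nbhd G I).card + δ.toNat := hcardU _
    have hPQ : (P ∪ Q).card = P.card + Q.card := Finset.card_union_of_disjoint hPQdisj
    have hfinal : I.card ≤ (nbhd G I).card + δ.toNat := by omega
    simp only [diff]
    omega
  have hTd : δ = diff G T := hT
  omega

/-- `ker(G) ⊆ core(G)` holds for every graph. -/
theorem kerG_subset_coreG (G : SimpleGraph V) [DecidableRel G.Adj] :
    kerG G ⊆ coreG G := by
  intro v hv
  simp only [kerG, Finset.mem_filter, Finset.mem_univ, true_and] at hv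
  simp only [coreG, Finset.mem_filter, Finset.mem_univ, true_and]
  intro A hA
  obtain ⟨T, hTA, hcrit⟩ := exists_critIndep_subset G hA
  exact hTA (hv T hcrit)

end CritGraph
end
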